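/- arXiv:1303.4048 — 2 statements merged into one kernel-verified Lean document; each statement's English description precedes it below -/
import Mathlib

section
/- Let G be a connected k-uniform hypergraph on {1,…,n} with at least one edge, and let x ∈ ℂ^n be a nonzero vector satisfying ((D+A) x^{k−1})_i = 0 for all i (i.e., x is an eigenvector of the signless Laplacian tensor associated with the eigenvalue zero). Then x_i ≠ 0 for every i ∈ {1,…,n}, and x_i^k = x_j^k for all i, j; consequently all components of x have the same modulus and every ratio x_i/x_j is a k-th root of unity. -/
open Finset

/-- Degree of vertex `i` in the hypergraph with edge set `E`. -/
def hdeg {n : ℕ} (E : Finset (Finset (Fin n))) (i : Fin n) : ℕ :=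
  (E.filter fun e => i ∈ e).card

/-- Laplacian tensor action `((D - A) x^{k-1})_i` over ℂ. -/
noncomputable def lapC (k : ℕ) {n : ℕ} (E : Finset (Finset (Fin n)))
    (x : Fin n → ℂ) (i : Fin n) : ℂ :=
  (hdeg E i : ℂ) * x i ^ (k - 1) -
    ∑ e ∈ E.filter (fun e => i ∈ e), ∏ j ∈ e.erase i, x j

/-- Signless Laplacian tensor action `((D + A) x^{k-1})_i` over ℂ. -/
noncomputable def slapC (k : ℕ) {n : ℕ} (E : Finset (Finset (Fin n)))
    (x : Fin n → ℂ) (i : Fin n) : ℂ :=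
  (hdeg E i : ℂ) * x i ^ (k - 1) +
    ∑ e ∈ E.filter (fun e => i ∈ e), ∏ j ∈ e.erase i, x j

/-- Laplacian tensor action `((D - A) x^{k-1})_i` over ℝ. -/
noncomputable def lapR (k : ℕ) {n : ℕ} (E : Finset (Finset (Fin n)))
    (x : Fin n → ℝ) (i : Fin n) : ℝ :=
  (hdeg E i : ℝ) * x i ^ (k - 1) -
    ∑ e ∈ E.filter (fun e => i ∈ e), ∏ j ∈ e.erase i, x j

/-- Signless Laplacian tensor action `((D + A) x^{k-1})_i` over ℝ. -/
noncomputable def slapR (k : ℕ) {n : ℕ} (E : Finset (Finset (Fin n)))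
    (x : Fin n → ℝ) (i : Fin n) : ℝ :=
  (hdeg E i : ℝ) * x i ^ (k - 1) +
    ∑ e ∈ E.filter (fun e => i ∈ e), ∏ j ∈ e.erase i, x j

/-- The hypergraph with edge set `E` is connected: every pair of distinct vertices is
joined by a chain of edges with consecutive edges intersecting. -/
def HConnected {n : ℕ} (E : Finset (Finset (Fin n))) : Prop :=
  ∀ i j : Fin n, i ≠ j → ∃ m : ℕ, ∃ es : Fin (m + 1) → Finset (Fin n),
    (∀ r, es r ∈ E) ∧ i ∈ es 0 ∧ j ∈ es (Fin.last m) ∧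
    ∀ r : Fin m, (es r.castSucc ∩ es r.succ).Nonempty

/-!
Let `i` be a vertex where `|x_i|` is maximal. Dividing the `i`-th eigen-equation by
`-x_i^{k-1}` writes `d_i` as a sum of `d_i` complex numbers of modulus at most `1`, one per
edge through `i`, so each of them equals `1`: for every edge `e ∋ i`,
`∏_{j ∈ e ∖ i} x_j = -x_i^{k-1}`. Taking moduli, every vertex of `e` has maximal modulus too,
and connectivity spreads this to all vertices. Now every vertex is maximal, so
`x_i^k = -∏_{j ∈ e} x_j` for every edge `e ∋ i`: `x^k` is constant on edges, hence, again by
connectivity, constant.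
-/

theorem Complex.eq_one_of_norm_le_one_of_sum_eq_card {ι : Type*} {s : Finset ι}
    {z : ι → ℂ} (hle : ∀ a ∈ s, ‖z a‖ ≤ 1) (hsum : ∑ a ∈ s, z a = s.card) :
    ∀ a ∈ s, z a = 1 := by
  have hre_le : ∀ a ∈ s, (z a).re ≤ 1 := fun a ha => (re_le_norm _).trans (hle a ha)
  have hre : ∀ a ∈ s, (z a).re = 1 := by
    refine (sum_eq_sum_iff_of_le hre_le).1 ?_
    rw [← re_sum, hsum, natCast_re, sum_const, nsmul_one]
  intro a ha
  have hnorm : ‖z a‖ = 1 := le_antisymm (hle a ha) (hre a ha ▸ re_le_norm _)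
  have him : (z a).im = 0 := abs_re_eq_norm.1 (by rw [hre a ha, hnorm, abs_one])
  exact Complex.ext (by simp [hre a ha]) (by simp [him])

theorem Finset.eq_of_prod_eq_pow_card {ι R : Type*} [CommSemiring R] [LinearOrder R]
    [IsStrictOrderedRing R] {s : Finset ι} {f : ι → R} {M : R} (hM : 0 < M)
    (h0 : ∀ a ∈ s, 0 ≤ f a) (hle : ∀ a ∈ s, f a ≤ M)
    (hprod : ∏ a ∈ s, f a = M ^ s.card) :
    ∀ a ∈ s, f a = M := by
  have hpos : ∀ a ∈ s, 0 < f a := fun a ha =>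
    (h0 a ha).lt_of_ne' fun hfa => (pow_pos hM s.card).ne' (hprod ▸ prod_eq_zero ha hfa)
  by_contra! ⟨a, ha, hne⟩
  have hlt := prod_lt_prod hpos hle ⟨a, ha, (hle a ha).lt_of_ne hne⟩
  rw [hprod, prod_const] at hlt
  exact hlt.false

theorem HConnected.forall_of_edge_closed {n : ℕ} {E : Finset (Finset (Fin n))}
    (hconn : HConnected E) {P : Fin n → Prop}
    (hP : ∀ e ∈ E, ∀ i ∈ e, P i → ∀ j ∈ e, P j)
    {i : Fin n} (hi : P i) (j : Fin n) : P j := by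
  rcases eq_or_ne i j with rfl | hij
  · exact hi
  obtain ⟨m, es, hes, hi0, hj, hinter⟩ := hconn i j hij
  suffices ∀ r, ∀ v ∈ es r, P v from this _ j hj
  intro r
  induction r using Fin.induction with
  | zero => exact hP _ (hes 0) i hi0 hi
  | succ r ih =>
    obtain ⟨w, hw⟩ := hinter r
    rw [mem_inter] at hw
    exact hP _ (hes r.succ) w hw.2 (ih w hw.1)

section MaximalModulus

variable {n k : ℕ} {E : Finset (Finset (Fin n))} {x : Fin n → ℂ} {i : Fin n}
  {e : Finset (Fin n)}

theorem prod_erase_eq_neg_pow_of_norm_le (hE : ∀ e ∈ E, e.card = k)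
    (heig : slapC k E x i = 0) (hxi : x i ≠ 0) (hmax : ∀ j, ‖x j‖ ≤ ‖x i‖)
    (he : e ∈ E) (hie : i ∈ e) : ∏ j ∈ e.erase i, x j = -x i ^ (k - 1) := by
  set F := E.filter (i ∈ ·)
  have hw : x i ^ (k - 1) ≠ 0 := pow_ne_zero _ hxi
  have hnorm : ∀ f ∈ F, ‖-(∏ j ∈ f.erase i, x j) / x i ^ (k - 1)‖ ≤ 1 := by
    intro f hf
    obtain ⟨hfE, hif⟩ := mem_filter.1 hf
    rw [norm_div, norm_neg, norm_pow, div_le_one (pow_pos (norm_pos_iff.2 hxi) _), norm_prod,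
      ← hE f hfE, ← card_erase_of_mem hif, ← prod_const]
    exact prod_le_prod (fun _ _ => norm_nonneg _) fun j _ => hmax j
  have hsum : ∑ f ∈ F, -(∏ j ∈ f.erase i, x j) / x i ^ (k - 1) = F.card := by
    rw [← sum_div, sum_neg_distrib, div_eq_iff hw]
    exact neg_eq_of_add_eq_zero_left heig
  have hone :=
    Complex.eq_one_of_norm_le_one_of_sum_eq_card hnorm hsum e (mem_filter.2 ⟨he, hie⟩)
  rw [div_eq_one_iff_eq hw] at hone
  exact neg_eq_iff_eq_neg.1 hone

theorem norm_eq_of_mem_edge_of_norm_le (hE : ∀ e ∈ E, e.card = k)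
    (heig : slapC k E x i = 0) (hxi : x i ≠ 0) (hmax : ∀ j, ‖x j‖ ≤ ‖x i‖)
    (he : e ∈ E) (hie : i ∈ e) : ∀ j ∈ e, ‖x j‖ = ‖x i‖ := by
  have hprod : ∏ j ∈ e.erase i, ‖x j‖ = ‖x i‖ ^ (e.erase i).card := by
    rw [← norm_prod, prod_erase_eq_neg_pow_of_norm_le hE heig hxi hmax he hie, norm_neg,
      norm_pow, card_erase_of_mem hie, hE e he]
  have hall := Finset.eq_of_prod_eq_pow_card (norm_pos_iff.2 hxi) (fun j _ => norm_nonneg _)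
    (fun j _ => hmax j) hprod
  intro j hj
  rcases eq_or_ne j i with rfl | hji
  · rfl
  · exact hall j (mem_erase.2 ⟨hji, hj⟩)

theorem pow_eq_neg_prod_of_norm_le (hE : ∀ e ∈ E, e.card = k)
    (heig : slapC k E x i = 0) (hxi : x i ≠ 0) (hmax : ∀ j, ‖x j‖ ≤ ‖x i‖)
    (he : e ∈ E) (hie : i ∈ e) : x i ^ k = -∏ j ∈ e, x j := by
  obtain ⟨m, rfl⟩ :=
    Nat.exists_eq_add_one_of_ne_zero (hE e he ▸ (card_pos.2 ⟨i, hie⟩).ne')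
  rw [← mul_prod_erase e x hie, prod_erase_eq_neg_pow_of_norm_le hE heig hxi hmax he hie,
    pow_succ']
  simp

end MaximalModulus

theorem stmt_3_general {n k : ℕ}
    (E : Finset (Finset (Fin n))) (hE : ∀ e ∈ E, e.card = k)
    (hconn : HConnected E)
    (x : Fin n → ℂ) (hx : x ≠ 0)
    (heig : ∀ i, slapC k E x i = 0) :
    (∀ i, x i ≠ 0) ∧ (∀ i j, x i ^ k = x j ^ k) ∧
      (∀ i j, ‖x i‖ = ‖x j‖) ∧
      (∀ i j, (x i / x j) ^ k = 1) := by
  obtain ⟨j₀, hj₀⟩ := Function.ne_iff.1 hx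
  have : Nonempty (Fin n) := ⟨j₀⟩
  obtain ⟨i₀, hi₀⟩ := Finite.exists_max fun j => ‖x j‖
  have hxi₀ : x i₀ ≠ 0 := norm_pos_iff.1 ((norm_pos_iff.2 hj₀).trans_le (hi₀ j₀))
  have hne_of_norm : ∀ j, ‖x j‖ = ‖x i₀‖ → x j ≠ 0 := fun j h =>
    norm_ne_zero_iff.1 (h ▸ norm_ne_zero_iff.2 hxi₀)
  have hnorm : ∀ j, ‖x j‖ = ‖x i₀‖ :=
    hconn.forall_of_edge_closed (fun e he i hie hi j hj =>
      (norm_eq_of_mem_edge_of_norm_le hE (heig i) (hne_of_norm i hi) (hi ▸ hi₀) he hie j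
        hj).trans hi) rfl
  have hxne : ∀ j, x j ≠ 0 := fun j => hne_of_norm j (hnorm j)
  have hmax : ∀ i j, ‖x j‖ ≤ ‖x i‖ := fun i j => ((hnorm j).trans (hnorm i).symm).le
  have hpow : ∀ j, x j ^ k = x i₀ ^ k :=
    hconn.forall_of_edge_closed (fun e he i hie hi j hj => by
      rw [pow_eq_neg_prod_of_norm_le hE (heig j) (hxne j) (hmax j) he hj,
        ← pow_eq_neg_prod_of_norm_le hE (heig i) (hxne i) (hmax i) he hie, hi]) rfl
  refine ⟨hxne, fun i j => (hpow i).trans (hpow j).symm,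
    fun i j => (hnorm i).trans (hnorm j).symm, fun i j => ?_⟩
  rw [div_pow, hpow i, hpow j, div_self (pow_ne_zero _ hxi₀)]

theorem stmt_3 {n k : ℕ} (hk : 3 ≤ k) (hn : k ≤ n)
    (E : Finset (Finset (Fin n))) (hE : ∀ e ∈ E, e.card = k)
    (hconn : HConnected E) (hne : E.Nonempty)
    (x : Fin n → ℂ) (hx : x ≠ 0)
    (heig : ∀ i, slapC k E x i = 0) :
    (∀ i, x i ≠ 0) ∧ (∀ i j, x i ^ k = x j ^ k) ∧
      (∀ i j, ‖x i‖ = ‖x j‖) ∧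
      (∀ i j, (x i / x j) ^ k = 1) :=
  stmt_3_general E hE hconn x hx heig
end

section
/- Let k be odd and let G be a k-uniform hypergraph on {1,…,n} in which every vertex belongs to at least one edge (G has no singletons). Then zero is not an eigenvalue of the signless Laplacian tensor of G: there is no nonzero x ∈ ℂ^n with ((D+A) x^{k−1})_i = 0 for all i. -/
open Finset

/-!
Take a vertex `v` of maximal modulus `M = |x_v| > 0` and an edge `e ∋ v`. At `v` the equation
reads `∑_{e ∋ v} ∏_{j ∈ e - v} x_j = -d_v x_v^{k-1}`, a sum of `d_v` numbers of modulus at most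
`M^{k-1}` equal to `d_v` times a number of modulus exactly `M^{k-1}`; so every summand is
`-x_v^{k-1}`, i.e. `P := ∏_{j ∈ e} x_j = -x_v^k`. Hence every vertex of `e` also has modulus `M`,
and the same argument at each `j ∈ e` gives `x_j^k = -P`. Multiplying over the `k` vertices of `e`,
`P^k = (-P)^k = -P^k` because `k` is odd, so `P = 0`, contradicting `|P| = M^k`.
-/

open RealInnerProductSpace

theorem eq_of_sum_eq_card_nsmul_of_norm_le {ι F : Type*} [NormedAddCommGroup F]
    [InnerProductSpace ℝ F] {s : Finset ι} {z : ι → F} {w : F}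
    (hz : ∀ i ∈ s, ‖z i‖ ≤ ‖w‖) (hsum : ∑ i ∈ s, z i = #s • w) :
    ∀ i ∈ s, z i = w := by
  have hinner_le : ∀ i ∈ s, ⟪w, z i⟫ ≤ ‖w‖ ^ 2 := fun i hi =>
    (real_inner_le_norm w (z i)).trans (by nlinarith [hz i hi, norm_nonneg w])
  have hinner_sum : ∑ i ∈ s, ⟪w, z i⟫ = ∑ _i ∈ s, ‖w‖ ^ 2 := by
    rw [← inner_sum, hsum, ← Nat.cast_smul_eq_nsmul ℝ, real_inner_smul_right,
      real_inner_self_eq_norm_sq, sum_const, nsmul_eq_mul]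
  have hinner := (sum_eq_sum_iff_of_le hinner_le).mp hinner_sum
  intro i hi
  have hsq : ‖z i - w‖ ^ 2 ≤ 0 := by
    rw [norm_sub_sq_real, real_inner_comm, hinner i hi]
    nlinarith [hz i hi, norm_nonneg (z i)]
  exact sub_eq_zero.mp (norm_eq_zero.mp (by nlinarith [norm_nonneg (z i - w)]))

theorem prod_eq_zero_of_forall_prod_eq_neg_pow {ι R : Type*} [CommRing R] [NoZeroDivisors R]
    [CharZero R] {k : ℕ} (hk : Odd k) {s : Finset ι} (hs : #s = k) {x : ι → R}
    (h : ∀ j ∈ s, ∏ i ∈ s, x i = -x j ^ k) :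
    ∏ i ∈ s, x i = 0 := by
  set P := ∏ i ∈ s, x i
  have hPk : P ^ k = -P ^ k :=
    calc P ^ k = ∏ j ∈ s, x j ^ k := (prod_pow s k x).symm
      _ = ∏ _j ∈ s, -P := prod_congr rfl fun j hj => by rw [h j hj, neg_neg]
      _ = -P ^ k := by rw [prod_const, hs, hk.neg_pow]
  exact pow_eq_zero_iff hk.pos.ne' |>.mp (add_self_eq_zero.mp (eq_neg_iff_add_eq_zero.mp hPk))

section SignlessLaplacian

variable {n k : ℕ} {E : Finset (Finset (Fin n))} {x : Fin n → ℂ}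

theorem norm_prod_erase_le {M : ℝ} (hM : ∀ j, ‖x j‖ ≤ M) {e : Finset (Fin n)}
    (he : #e = k) {j : Fin n} (hj : j ∈ e) :
    ‖∏ i ∈ e.erase j, x i‖ ≤ M ^ (k - 1) :=
  calc ‖∏ i ∈ e.erase j, x i‖ ≤ ∏ i ∈ e.erase j, ‖x i‖ := norm_prod_le _ _
    _ ≤ ∏ _i ∈ e.erase j, M := prod_le_prod (fun i _ => norm_nonneg (x i)) fun i _ => hM i
    _ = M ^ (k - 1) := by rw [prod_const, card_erase_of_mem hj, he]

variable (hE : ∀ e ∈ E, #e = k)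
include hE

theorem prod_erase_eq_neg_pow_of_slapC_eq_zero {v : Fin n} (hmax : ∀ j, ‖x j‖ ≤ ‖x v‖)
    (hv : slapC k E x v = 0) {e : Finset (Fin n)} (he : e ∈ E) (hve : v ∈ e) :
    ∏ j ∈ e.erase v, x j = -x v ^ (k - 1) := by
  refine eq_of_sum_eq_card_nsmul_of_norm_le (s := E.filter (v ∈ ·))
    (z := fun e => ∏ j ∈ e.erase v, x j) ?_ ?_ e (mem_filter.mpr ⟨he, hve⟩)
  · intro e he
    rw [norm_neg, norm_pow]
    exact norm_prod_erase_le hmax (hE e (mem_filter.mp he).1) (mem_filter.mp he).2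
  · rw [nsmul_eq_mul]
    unfold slapC hdeg at hv
    linear_combination hv

theorem prod_eq_neg_pow_of_slapC_eq_zero (hk : k ≠ 0) {v : Fin n}
    (hmax : ∀ j, ‖x j‖ ≤ ‖x v‖) (hv : slapC k E x v = 0) {e : Finset (Fin n)} (he : e ∈ E)
    (hve : v ∈ e) :
    ∏ j ∈ e, x j = -x v ^ k := by
  rw [← mul_prod_erase e x hve, prod_erase_eq_neg_pow_of_slapC_eq_zero hE hmax hv he hve,
    mul_neg, mul_pow_sub_one hk]

theorem norm_eq_of_prod_eq_neg_pow {v : Fin n} (hmax : ∀ j, ‖x j‖ ≤ ‖x v‖) (hv0 : x v ≠ 0)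
    {e : Finset (Fin n)} (he : e ∈ E) (hprod : ∏ j ∈ e, x j = -x v ^ k) {j : Fin n}
    (hj : j ∈ e) :
    ‖x j‖ = ‖x v‖ := by
  have hk : k ≠ 0 := by
    rw [← hE e he]
    exact (card_pos.mpr ⟨j, hj⟩).ne'
  have hle : ‖x v‖ * ‖x v‖ ^ (k - 1) ≤ ‖x j‖ * ‖x v‖ ^ (k - 1) :=
    calc ‖x v‖ * ‖x v‖ ^ (k - 1) = ‖∏ i ∈ e, x i‖ := by
          rw [hprod, norm_neg, norm_pow, mul_pow_sub_one hk]
      _ = ‖x j‖ * ‖∏ i ∈ e.erase j, x i‖ := by rw [← mul_prod_erase e x hj, norm_mul]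
      _ ≤ ‖x j‖ * ‖x v‖ ^ (k - 1) :=
          mul_le_mul_of_nonneg_left (norm_prod_erase_le hmax (hE e he) hj) (norm_nonneg _)
  exact (hmax j).antisymm (le_of_mul_le_mul_right hle (by positivity))

end SignlessLaplacian

theorem stmt_14_general {n k : ℕ} (hkodd : Odd k)
    (E : Finset (Finset (Fin n))) (hE : ∀ e ∈ E, e.card = k)
    (hnosing : ∀ i : Fin n, ∃ e ∈ E, i ∈ e) :
    ¬ ∃ x : Fin n → ℂ, x ≠ 0 ∧ ∀ i, slapC k E x i = 0 := by
  rintro ⟨x, hx0, hx⟩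
  obtain ⟨i, hi⟩ := Function.ne_iff.mp hx0
  obtain ⟨v, -, hmax⟩ := exists_max_image univ (‖x ·‖) ⟨i, mem_univ i⟩
  replace hmax : ∀ j, ‖x j‖ ≤ ‖x v‖ := fun j => hmax j (mem_univ j)
  have hv0 : x v ≠ 0 := norm_pos_iff.mp ((norm_pos_iff.mpr hi).trans_le (hmax i))
  have hk : k ≠ 0 := hkodd.pos.ne'
  obtain ⟨e, he, hve⟩ := hnosing v
  have hprod_v := prod_eq_neg_pow_of_slapC_eq_zero hE hk hmax (hx v) he hve
  have hprod : ∀ j ∈ e, ∏ i ∈ e, x i = -x j ^ k := fun j hj =>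
    prod_eq_neg_pow_of_slapC_eq_zero hE hk
      (norm_eq_of_prod_eq_neg_pow hE hmax hv0 he hprod_v hj ▸ hmax) (hx j) he hj
  have hP0 := prod_eq_zero_of_forall_prod_eq_neg_pow hkodd (hE e he) hprod
  exact hv0 (pow_eq_zero_iff hk |>.mp (neg_eq_zero.mp (hprod_v ▸ hP0)))

theorem stmt_14 {n k : ℕ} (hk : 3 ≤ k) (hn : k ≤ n) (hkodd : Odd k)
    (E : Finset (Finset (Fin n))) (hE : ∀ e ∈ E, e.card = k)
    (hnosing : ∀ i : Fin n, ∃ e ∈ E, i ∈ e) :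
    ¬ ∃ x : Fin n → ℂ, x ≠ 0 ∧ ∀ i, slapC k E x i = 0 :=
  stmt_14_general hkodd E hE hnosing
end
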